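/- Let P(t) = A e^{-ζωt + i(ωt+φ)} and G(t) = e^{-(t−τ)²/(2σ²τ²)} with A ∈ ℝ, ω, ζ, σ, τ > 0, φ ∈ ℝ. Then for every t ≥ 0, the truncated convolution ∫₀^t G(x) P(t−x) dx equals A √(π/2) σ τ [erf((1+(ζ−i)σ²τω)/(√2 σ)) + erf((t − τ(1+(ζ−i)σ²τω))/(√2 στ))] · exp(½(ζ−i)ω(−2t + τ(2+(ζ−i)σ²τω)) + iφ), where erf is the (complex-argument) Gauss error function. -/

import Mathlib

/-- The Gauss error function extended to complex arguments:
`erf z = (2/√π) ∫₀^z e^{-u²} du`, parametrized along the segment from `0` to `z`. -/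
noncomputable def cerf (z : ℂ) : ℂ :=
  (2 / Real.sqrt Real.pi) * ∫ x in (0 : ℝ)..1, z * Complex.exp (-((x : ℂ) * z) ^ 2)


section PronyAux

open MeasureTheory intervalIntegral Set

noncomputable def g (m c : ℂ) (x s : ℝ) : ℂ :=
  Complex.exp (-(((x : ℂ) * ((s : ℂ) - m)) ^ 2 / c)) *
    (1 - 2 * (x : ℂ) ^ 2 * ((s : ℂ) - m) ^ 2 / c)

lemma g_cont (m c : ℂ) : Continuous (fun p : ℝ × ℝ => g m c p.1 p.2) := by
  unfold g; fun_prop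

lemma B1 (m c : ℂ) (hc : c ≠ 0) (x t : ℝ) :
    ∫ s in (0:ℝ)..t, g m c x s
      = ((t : ℂ) - m) * Complex.exp (-(((x : ℂ) * ((t : ℂ) - m)) ^ 2 / c))
        + m * Complex.exp (-(((x : ℂ) * m) ^ 2 / c)) := by
  have h : ∀ s : ℝ, HasDerivAt (fun s : ℝ =>
      ((s : ℂ) - m) * Complex.exp (-(((x : ℂ) * ((s : ℂ) - m)) ^ 2 / c))) (g m c x s) s := by
    intro s
    have h1 : HasDerivAt (fun s : ℝ => ((s : ℂ) - m)) 1 s := by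
      simpa using ((hasDerivAt_id s).ofReal_comp.sub_const m)
    have hu : HasDerivAt (fun s : ℝ => (x:ℂ) * ((s:ℂ) - m)) ((x:ℂ) * 1) s := h1.const_mul _
    have h2 : HasDerivAt (fun s : ℝ => -(((x : ℂ) * ((s : ℂ) - m)) ^ 2 / c))
        (-(((x:ℂ)*1*((x:ℂ)*((s:ℂ)-m)) + ((x:ℂ)*((s:ℂ)-m))*((x:ℂ)*1))/c)) s := by
      simp only [pow_two]
      exact ((hu.mul hu).div_const c).neg
    have := h1.mul h2.cexp
    refine this.congr_deriv ?_
    unfold g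
    field_simp
    ring
  rw [intervalIntegral.integral_eq_sub_of_hasDerivAt (a := (0:ℝ)) (b := t)
    (f := fun s : ℝ => ((s : ℂ) - m) * Complex.exp (-(((x : ℂ) * ((s : ℂ) - m)) ^ 2 / c)))
    (fun s _ => h s)
    (by apply Continuous.intervalIntegrable; unfold g; fun_prop)]
  push_cast; ring

lemma B2 (m c : ℂ) (hc : c ≠ 0) (s : ℝ) :
    ∫ x in (0:ℝ)..1, g m c x s = Complex.exp (-(((s : ℂ) - m) ^ 2 / c)) := by
  have h : ∀ x : ℝ, HasDerivAt (fun x : ℝ =>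
      (x : ℂ) * Complex.exp (-(((x : ℂ) * ((s : ℂ) - m)) ^ 2 / c))) (g m c x s) x := by
    intro x
    have h1 : HasDerivAt (fun x : ℝ => (x : ℂ)) 1 x := (hasDerivAt_id x).ofReal_comp
    have hu : HasDerivAt (fun x : ℝ => (x:ℂ) * ((s:ℂ) - m)) (1 * ((s:ℂ) - m)) x :=
      h1.mul_const _
    have h2 : HasDerivAt (fun x : ℝ => -(((x : ℂ) * ((s : ℂ) - m)) ^ 2 / c))
        (-((1*((s:ℂ)-m)*((x:ℂ)*((s:ℂ)-m)) + ((x:ℂ)*((s:ℂ)-m))*(1*((s:ℂ)-m)))/c)) x := by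
      simp only [pow_two]
      exact ((hu.mul hu).div_const c).neg
    have := h1.mul h2.cexp
    refine this.congr_deriv ?_
    unfold g
    field_simp
    ring
  rw [intervalIntegral.integral_eq_sub_of_hasDerivAt (a := (0:ℝ)) (b := (1:ℝ))
    (f := fun x : ℝ => (x : ℂ) * Complex.exp (-(((x : ℂ) * ((s : ℂ) - m)) ^ 2 / c)))
    (fun x _ => h x)
    (by apply Continuous.intervalIntegrable; unfold g; fun_prop)]
  push_cast; ring

lemma swap_g (m c : ℂ) (t : ℝ) (ht : 0 ≤ t) :
    ∫ x in (0:ℝ)..1, ∫ s in (0:ℝ)..t, g m c x s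
      = ∫ s in (0:ℝ)..t, ∫ x in (0:ℝ)..1, g m c x s := by
  have h01 : (0:ℝ) ≤ 1 := by norm_num
  simp only [intervalIntegral.integral_of_le ht, intervalIntegral.integral_of_le h01]
  have hint : Integrable (Function.uncurry (fun x s => g m c x s))
      ((volume.restrict (Ioc (0:ℝ) 1)).prod (volume.restrict (Ioc (0:ℝ) t))) := by
    rw [Measure.prod_restrict]
    apply (((g_cont m c).continuousOn).integrableOn_compact
      (isCompact_Icc (a := (0:ℝ)) (b := 1) |>.prod (isCompact_Icc (a := (0:ℝ)) (b := t)))).mono_set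
    exact Set.prod_mono Set.Ioc_subset_Icc_self Set.Ioc_subset_Icc_self
  exact MeasureTheory.integral_integral_swap hint

lemma key (m c : ℂ) (hc : c ≠ 0) (t : ℝ) (ht : 0 ≤ t) :
    ∫ s in (0:ℝ)..t, Complex.exp (-(((s : ℂ) - m) ^ 2 / c))
      = (m * ∫ x in (0:ℝ)..1, Complex.exp (-(((x : ℂ) * m) ^ 2 / c)))
        + ((t:ℂ) - m) * ∫ x in (0:ℝ)..1, Complex.exp (-(((x : ℂ) * ((t:ℂ) - m)) ^ 2 / c)) := by
  have h1 : ∫ s in (0:ℝ)..t, Complex.exp (-(((s : ℂ) - m) ^ 2 / c))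
      = ∫ s in (0:ℝ)..t, ∫ x in (0:ℝ)..1, g m c x s := by
    refine intervalIntegral.integral_congr fun s _ => ?_
    rw [B2 m c hc s]
  rw [h1, ← swap_g m c t ht]
  have h2 : ∫ x in (0:ℝ)..1, ∫ s in (0:ℝ)..t, g m c x s
      = ∫ x in (0:ℝ)..1, (((t : ℂ) - m) * Complex.exp (-(((x : ℂ) * ((t : ℂ) - m)) ^ 2 / c))
          + m * Complex.exp (-(((x : ℂ) * m) ^ 2 / c))) := by
    refine intervalIntegral.integral_congr fun x _ => ?_
    rw [B1 m c hc x t]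
  rw [h2, intervalIntegral.integral_add, intervalIntegral.integral_const_mul,
    intervalIntegral.integral_const_mul]
  · rw [add_comm]
  · apply Continuous.intervalIntegrable; fun_prop
  · apply Continuous.intervalIntegrable; fun_prop

end PronyAux

/-- Explicit expression for the advanced Prony mode: the truncated convolution of the standard
Prony mode `P(t) = A e^{-ζωt+i(ωt+φ)}` with the Gaussian pulse `G(t) = e^{-(t−τ)²/(2σ²τ²)}`. -/
theorem advanced_prony_mode_formula (A ω ζ σ τ φ : ℝ) (hω : 0 < ω) (hζ : 0 < ζ)
    (hσ : 0 < σ) (hτ : 0 < τ) :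
    ∀ t : ℝ, 0 ≤ t →
      (∫ x in (0 : ℝ)..t,
          Complex.exp (-(((x - τ) ^ 2 / (2 * σ ^ 2 * τ ^ 2) : ℝ) : ℂ)) *
            ((A : ℂ) * Complex.exp ((-(ζ * ω * (t - x)) : ℝ) +
              Complex.I * ((ω * (t - x) + φ : ℝ)))))
        = (A : ℂ) * (Real.sqrt (Real.pi / 2) : ℂ) * (σ : ℂ) * (τ : ℂ) *
            (cerf ((1 + ((ζ : ℂ) - Complex.I) * σ ^ 2 * τ * ω) / ((Real.sqrt 2 : ℂ) * σ)) +
              cerf (((t : ℂ) - τ * (1 + ((ζ : ℂ) - Complex.I) * σ ^ 2 * τ * ω)) /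
                ((Real.sqrt 2 : ℂ) * σ * τ))) *
            Complex.exp ((1 / 2) * ((ζ : ℂ) - Complex.I) * ω *
                (-2 * t + τ * (2 + ((ζ : ℂ) - Complex.I) * σ ^ 2 * τ * ω)) +
              Complex.I * φ) := by
  intro t ht
  have hσ' : (σ:ℂ) ≠ 0 := Complex.ofReal_ne_zero.2 hσ.ne'
  have hτ' : (τ:ℂ) ≠ 0 := Complex.ofReal_ne_zero.2 hτ.ne'
  have hs2 : (0:ℝ) < Real.sqrt 2 := Real.sqrt_pos.2 (by norm_num)
  have hr : ((Real.sqrt 2 : ℝ):ℂ) ≠ 0 := Complex.ofReal_ne_zero.2 hs2.ne'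
  have hr2 : ((Real.sqrt 2 : ℝ):ℂ) ^ 2 = 2 := by
    rw [← Complex.ofReal_pow, Real.sq_sqrt (by norm_num : (0:ℝ) ≤ 2)]; norm_num
  set K : ℂ := ((ζ : ℂ) - Complex.I) * ω with hK
  set m : ℂ := (τ:ℂ) + K * σ^2 * τ^2 with hm
  set c : ℂ := 2 * (σ:ℂ)^2 * (τ:ℂ)^2 with hc0
  have hc : c ≠ 0 := by
    rw [hc0]
    exact mul_ne_zero (mul_ne_zero two_ne_zero (pow_ne_zero 2 hσ')) (pow_ne_zero 2 hτ')
  set C : ℂ := (A:ℂ) * Complex.exp (Complex.I*(φ:ℂ) + K*(τ:ℂ) + K^2*(σ:ℂ)^2*(τ:ℂ)^2/2 - K*(t:ℂ))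
    with hC
  have hpt : ∀ x : ℝ,
      Complex.exp (-(((x - τ) ^ 2 / (2 * σ ^ 2 * τ ^ 2) : ℝ) : ℂ)) *
        ((A : ℂ) * Complex.exp ((-(ζ * ω * (t - x)) : ℝ) +
          Complex.I * ((ω * (t - x) + φ : ℝ))))
      = C * Complex.exp (-(((x:ℂ) - m)^2 / c)) := by
    intro x
    rw [hC, mul_assoc (A:ℂ) (Complex.exp _) (Complex.exp _), ← Complex.exp_add, mul_comm (Complex.exp _) ((A:ℂ) * _),
      mul_assoc (A:ℂ) (Complex.exp _) (Complex.exp _), ← Complex.exp_add]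
    congr 1
    rw [hm, hK, hc0]
    push_cast
    field_simp
    ring
  rw [intervalIntegral.integral_congr (fun x _ => hpt x), intervalIntegral.integral_const_mul,
    key m c hc t ht]
  set D : ℂ := ((Real.sqrt 2 : ℝ):ℂ) * σ * τ with hD
  have hDc : D ^ 2 = c := by rw [hD, hc0, mul_pow, mul_pow, hr2]
  have hDne : D ≠ 0 := by rw [hD]; exact mul_ne_zero (mul_ne_zero hr hσ') hτ'
  have hsq : ∀ (x : ℝ) (w : ℂ), -((x:ℂ) * (w / D)) ^ 2 = -(((x:ℂ) * w) ^ 2 / c) := by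
    intro x w
    rw [mul_pow, div_pow, hDc, mul_pow, mul_div_assoc]
  have hz1 : (1 + ((ζ:ℂ) - Complex.I) * σ ^ 2 * τ * ω) / (((Real.sqrt 2:ℝ):ℂ) * σ) = m / D := by
    rw [hm, hK, hD]
    field_simp
  have hz2 : ((t:ℂ) - τ * (1 + ((ζ:ℂ) - Complex.I) * σ ^ 2 * τ * ω)) /
      (((Real.sqrt 2:ℝ):ℂ) * σ * τ) = ((t:ℂ) - m) / D := by
    rw [hm, hK, hD]
    ring_nf
  have hcerf : ∀ w : ℂ, cerf (w / D)
      = (2 / (Real.sqrt Real.pi) : ℝ) * ((w / D) * ∫ x in (0:ℝ)..1,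
          Complex.exp (-(((x:ℂ) * w) ^ 2 / c))) := by
    intro w
    unfold cerf
    rw [intervalIntegral.integral_const_mul]
    push_cast
    congr 2
    exact intervalIntegral.integral_congr fun x _ => by rw [hsq]
  rw [hz1, hz2, hcerf m, hcerf ((t:ℂ) - m)]
  have hexp : Complex.exp ((1 / 2) * ((ζ : ℂ) - Complex.I) * (ω:ℂ) *
        (-2 * (t:ℂ) + (τ:ℂ) * (2 + ((ζ : ℂ) - Complex.I) * (σ:ℂ) ^ 2 * (τ:ℂ) * (ω:ℂ))) +
        Complex.I * (φ:ℂ))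
      = Complex.exp (Complex.I*(φ:ℂ) + K*(τ:ℂ) + K^2*(σ:ℂ)^2*(τ:ℂ)^2/2 - K*(t:ℂ)) := by
    congr 1
    rw [hK]
    ring
  rw [hexp, hC]
  have hπ : (0:ℝ) < Real.sqrt Real.pi := Real.sqrt_pos.2 Real.pi_pos
  have hπ' : ((Real.sqrt Real.pi : ℝ):ℂ) ≠ 0 := Complex.ofReal_ne_zero.2 hπ.ne'
  have hrealC : ((Real.sqrt (Real.pi/2) : ℝ):ℂ) * ((Real.sqrt 2 : ℝ):ℂ)
      = ((Real.sqrt Real.pi : ℝ):ℂ) := by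
    rw [← Complex.ofReal_mul, ← Real.sqrt_mul (by positivity)]
    norm_num
  set I₁ : ℂ := ∫ x in (0:ℝ)..1, Complex.exp (-(((x:ℂ) * m) ^ 2 / c)) with hI₁
  set I₂ : ℂ := ∫ x in (0:ℝ)..1, Complex.exp (-(((x:ℂ) * ((t:ℂ) - m)) ^ 2 / c)) with hI₂
  set E : ℂ := Complex.exp (Complex.I*(φ:ℂ) + K*(τ:ℂ) + K^2*(σ:ℂ)^2*(τ:ℂ)^2/2 - K*(t:ℂ)) with hE
  rw [hD]
  push_cast
  field_simp
  linear_combination (↑A * E * (m * I₁ + ((t:ℂ) - m) * I₂) *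
    ((Real.sqrt (Real.pi/2):ℝ):ℂ)) * hr2 - (↑A * E * (m * I₁ + ((t:ℂ) - m) * I₂) * ((Real.sqrt 2:ℝ):ℂ)) * hrealC
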